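/- Let H, K, F be real separable Hilbert spaces, Z : H → K a bounded linear operator, and P the orthogonal projection on H whose range equals the closure of the range of Z^*. Then for any bounded linear operator G : F → H and any λ > 0, ‖(I − P)G‖ ≤ λ^{1/2} ‖(Z^*Z + λI)^{-1/2} G‖. -/

import Mathlib

open ContinuousLinearMap

open scoped RealInnerProductSpace

/-- `S` is the inverse `T⁻¹` of the operator `T`. -/
def IsInvOf {E : Type*} [NormedAddCommGroup E] [InnerProductSpace ℝ E]
    [CompleteSpace E] (S T : E →L[ℝ] E) : Prop :=
  S ∘L T = 1 ∧ T ∘L S = 1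

/-- `S` is the inverse square root `T^{-1/2}` of the positive invertible operator `T`,
i.e. `S` is positive and `S ∘ S = T⁻¹`. -/
def IsInvSqrtOf {E : Type*} [NormedAddCommGroup E] [InnerProductSpace ℝ E]
    [CompleteSpace E] (S T : E →L[ℝ] E) : Prop :=
  S.IsPositive ∧ IsInvOf (S ∘L S) T

/-!
Write `T = Z^*Z + λ` and `Q = I - P`. Every vector `u = Qx` lies in `ker Z = (range Z^*)ᗮ`, so
`T u = λ u` and hence `S² u = λ⁻¹ u`, giving `‖S u‖ = λ^{-1/2} ‖u‖`. Then
`‖u‖² = ⟪u, x⟫ = λ ⟪S² u, x⟫ = λ ⟪S u, S x⟫ ≤ λ^{1/2} ‖u‖ ‖S x‖`, i.e. `‖Q x‖ ≤ λ^{1/2} ‖S x‖`.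
-/

theorem ContinuousLinearMap.ker_le_ker_of_range_adjoint_le {𝕜 E F : Type*} [RCLike 𝕜]
    [NormedAddCommGroup E] [InnerProductSpace 𝕜 E] [CompleteSpace E]
    [NormedAddCommGroup F] [InnerProductSpace 𝕜 F] [CompleteSpace F]
    {P : E →L[𝕜] E} (hP : IsSelfAdjoint P) {Z : E →L[𝕜] F}
    (h : LinearMap.range (adjoint Z : F →ₗ[𝕜] E) ≤ LinearMap.range (P : E →ₗ[𝕜] E)) :
    LinearMap.ker (P : E →ₗ[𝕜] E) ≤ LinearMap.ker (Z : E →ₗ[𝕜] F) := by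
  rw [← hP.isStarNormal.orthogonal_range, ← adjoint_adjoint Z, ← orthogonal_range]
  exact Submodule.orthogonal_le h

section

variable {E : Type*} [NormedAddCommGroup E] [InnerProductSpace ℝ E]

theorem ContinuousLinearMap.apply_eq_inv_smul_of_comp_eq_one {R T : E →L[ℝ] E}
    (hRT : R ∘L T = 1) {lam : ℝ} (hlam : lam ≠ 0) {u : E} (hu : T u = lam • u) :
    R u = lam⁻¹ • u := by
  have h := congr($hRT u)
  rw [comp_apply, hu, map_smul, one_apply_eq_self] at h
  exact (eq_inv_smul_iff₀ hlam).mpr h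

theorem ContinuousLinearMap.IsStarProjection.norm_sq_apply_eq_inner [CompleteSpace E]
    {Q : E →L[ℝ] E} (hQ : IsStarProjection Q) (x : E) : ‖Q x‖ ^ 2 = ⟪Q x, x⟫ :=
  calc ‖Q x‖ ^ 2 = ⟪Q x, Q x⟫ := (real_inner_self_eq_norm_sq _).symm
    _ = ⟪Q (Q x), x⟫ := (hQ.isSelfAdjoint.isSymmetric (Q x) x).symm
    _ = ⟪Q x, x⟫ := congr(⟪$(hQ.isIdempotentElem) x, x⟫)

theorem ContinuousLinearMap.IsPositive.inner_le_of_apply_apply_eq_inv_smul {S : E →L[ℝ] E}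
    (hS : S.IsPositive) {lam : ℝ} (hlam : 0 < lam) {u : E} (hu : S (S u) = lam⁻¹ • u)
    (x : E) : ⟪u, x⟫ ≤ √lam * ‖u‖ * ‖S x‖ := by
  have hSu_sq : ‖S u‖ ^ 2 = lam⁻¹ * ‖u‖ ^ 2 := by
    rw [← real_inner_self_eq_norm_sq, hS.inner_left_eq_inner_right, hu, real_inner_smul_right,
      real_inner_self_eq_norm_sq]
  have hSu : ‖S u‖ = (√lam)⁻¹ * ‖u‖ := by
    rw [← Real.sqrt_sq (norm_nonneg (S u)), hSu_sq, Real.sqrt_mul (by positivity),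
      Real.sqrt_sq (norm_nonneg u), Real.sqrt_inv]
  calc ⟪u, x⟫ = lam * ⟪S (S u), x⟫ := by
        rw [hu, real_inner_smul_left, mul_inv_cancel_left₀ hlam.ne']
    _ = lam * ⟪S u, S x⟫ := by rw [hS.inner_left_eq_inner_right]
    _ ≤ lam * (‖S u‖ * ‖S x‖) := by gcongr; exact real_inner_le_norm _ _
    _ = lam / √lam * ‖u‖ * ‖S x‖ := by rw [hSu]; ring
    _ = √lam * ‖u‖ * ‖S x‖ := by rw [Real.div_sqrt]

theorem ContinuousLinearMap.IsStarProjection.norm_apply_le [CompleteSpace E]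
    {Q S : E →L[ℝ] E} (hQ : IsStarProjection Q) (hS : S.IsPositive) {lam : ℝ} (hlam : 0 < lam)
    {x : E} (hx : S (S (Q x)) = lam⁻¹ • Q x) : ‖Q x‖ ≤ √lam * ‖S x‖ := by
  have h := hQ.norm_sq_apply_eq_inner x ▸ hS.inner_le_of_apply_apply_eq_inv_smul hlam hx x
  nlinarith [norm_nonneg (Q x), mul_nonneg (Real.sqrt_nonneg lam) (norm_nonneg (S x))]

end

theorem stmt1_general {H K F : Type*}
    [NormedAddCommGroup H] [InnerProductSpace ℝ H] [CompleteSpace H]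
    [NormedAddCommGroup K] [InnerProductSpace ℝ K] [CompleteSpace K]
    [NormedAddCommGroup F] [InnerProductSpace ℝ F]
    (Z : H →L[ℝ] K) (G : F →L[ℝ] H) (lam : ℝ) (hlam : 0 < lam)
    (P : H →L[ℝ] H) (hPproj : P ∘L P = P) (hPsa : IsSelfAdjoint P)
    (hPrange : LinearMap.range (P : H →ₗ[ℝ] H) = (LinearMap.range (adjoint Z : K →ₗ[ℝ] H)).topologicalClosure)
    (S : H →L[ℝ] H)
    (hS : IsInvSqrtOf S ((adjoint Z) ∘L Z + lam • (1 : H →L[ℝ] H))) :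
    ‖(1 - P) ∘L G‖ ≤ Real.sqrt lam * ‖S ∘L G‖ := by
  have hP : IsStarProjection P := ⟨hPproj, hPsa⟩
  have hZ (x : H) : Z ((1 - P) x) = 0 :=
    ker_le_ker_of_range_adjoint_le hPsa (hPrange ▸ Submodule.le_topologicalClosure _)
      congr($(hP.mul_one_sub_self) x)
  have hSS (x : H) : S (S ((1 - P) x)) = lam⁻¹ • (1 - P) x :=
    apply_eq_inv_smul_of_comp_eq_one hS.2.1 hlam.ne' (by
      simp only [add_apply, comp_apply, hZ x, map_zero, smul_apply, one_apply_eq_self, zero_add])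
  refine opNorm_le_bound _ (by positivity) fun f => ?_
  calc ‖((1 - P) ∘L G) f‖ ≤ √lam * ‖S (G f)‖ := hP.one_sub.norm_apply_le hS.1 hlam (hSS (G f))
    _ ≤ √lam * (‖S ∘L G‖ * ‖f‖) := by gcongr; exact (S ∘L G).le_opNorm f
    _ = √lam * ‖S ∘L G‖ * ‖f‖ := by ring

/-- Let `Z : H → K` be bounded, `P` the orthogonal projection of `H` onto the
closure of the range of `Z^*`, `G : F → H` bounded and `lam > 0`. Then
`‖(I − P) G‖ ≤ lam^{1/2} ‖(Z^* Z + lam I)^{-1/2} G‖`. -/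
theorem stmt1 {H K F : Type*}
    [NormedAddCommGroup H] [InnerProductSpace ℝ H] [CompleteSpace H]
    [TopologicalSpace.SeparableSpace H]
    [NormedAddCommGroup K] [InnerProductSpace ℝ K] [CompleteSpace K]
    [TopologicalSpace.SeparableSpace K]
    [NormedAddCommGroup F] [InnerProductSpace ℝ F] [CompleteSpace F]
    [TopologicalSpace.SeparableSpace F]
    (Z : H →L[ℝ] K) (G : F →L[ℝ] H) (lam : ℝ) (hlam : 0 < lam)
    (P : H →L[ℝ] H) (hPproj : P ∘L P = P) (hPsa : IsSelfAdjoint P)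
    (hPrange : LinearMap.range (P : H →ₗ[ℝ] H) = (LinearMap.range (adjoint Z : K →ₗ[ℝ] H)).topologicalClosure)
    (S : H →L[ℝ] H)
    (hS : IsInvSqrtOf S ((adjoint Z) ∘L Z + lam • (1 : H →L[ℝ] H))) :
    ‖(1 - P) ∘L G‖ ≤ Real.sqrt lam * ‖S ∘L G‖ :=
  stmt1_general Z G lam hlam P hPproj hPsa hPrange S hS
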